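/- arXiv:0907.3693 — 8 statements merged into one kernel-verified Lean document; each statement's English description precedes it below -/
import Mathlib

section
/- For 0 < ρ < 1 and any integer r ≥ 1, the identity Σ_{l=1}^{r-1} ((r-l)/l)(ρ/(1+ρ))^l = r·log(1+ρ) - ρ + ρ^r(1+ρ)^{1-r} - r·Σ_{l=r}^∞ (1/l)(ρ/(1+ρ))^l holds. -/
/-! With `x = ρ/(1+ρ)` one has `1 - x = (1+ρ)⁻¹`, so `log (1+ρ) = ∑_{l ≥ 1} x^l / l`.
Splitting `(r-l)/l · x^l = r · x^l/l - x^l`, the first part is `r` times a partial sum of this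
series, i.e. `r (log (1+ρ) - tail)`, and the second is a geometric sum equal to
`ρ - ρ^r (1+ρ)^(1-r)`. -/

open Finset Real

lemma hasSum_pow_div_natCast_of_abs_lt_one {x : ℝ} (hx : |x| < 1) :
    HasSum (fun l : ℕ => x ^ l / l) (-log (1 - x)) := by
  -- the `l = 0` term is `x ^ 0 / 0 = 0`
  refine (hasSum_nat_add_iff' 1).mp ?_
  simpa using hasSum_pow_div_log_of_abs_lt_one hx

lemma sum_Ico_pow_div_add_tsum {x : ℝ} (hx : |x| < 1) (r : ℕ) :
    ∑ l ∈ Ico 1 r, x ^ l / l + ∑' n : ℕ, x ^ (n + r) / ↑(n + r) = -log (1 - x) := by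
  have hf := hasSum_pow_div_natCast_of_abs_lt_one hx
  rw [← hf.tsum_eq, ← hf.summable.sum_add_tsum_nat_add r]
  congr 1
  refine sum_subset (fun l hl => by simp at hl ⊢; omega) fun l hl hl' => ?_
  obtain rfl : l = 0 := by simp at hl hl'; omega
  simp

lemma sum_Ico_div_one_add_pow {ρ : ℝ} (hρ : 1 + ρ ≠ 0) {r : ℕ} (hr : 1 ≤ r) :
    ∑ l ∈ Ico 1 r, (ρ / (1 + ρ)) ^ l = ρ - ρ ^ r * (1 + ρ) ^ ((1 : ℤ) - r) := by
  have hx : ρ / (1 + ρ) - 1 = -(1 + ρ)⁻¹ := by field_simp; ring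
  rw [geom_sum_Ico (sub_ne_zero.mp (by rw [hx]; simpa using hρ)) hr, hx, div_pow]
  obtain ⟨s, rfl⟩ : ∃ s, r = s + 1 := ⟨r - 1, by omega⟩
  rw [show (1 : ℤ) - (s + 1 : ℕ) = -s by push_cast; ring, zpow_neg, zpow_natCast]
  field_simp
  ring

theorem stmt_1_general (ρ : ℝ) (hρ0 : 0 < ρ) (r : ℕ) (hr : 1 ≤ r) :
    ∑ l ∈ Finset.Icc 1 (r-1), (((r:ℝ)-l)/l) * (ρ/(1+ρ))^l
      = r * Real.log (1+ρ) - ρ + ρ^r * (1+ρ)^((1:ℤ)-r)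
        - r * ∑' n : ℕ, (1/((n:ℝ)+r)) * (ρ/(1+ρ))^(n+r) := by
  have h1ρ : 0 < 1 + ρ := by linarith
  have hx : |ρ / (1 + ρ)| < 1 := by
    rw [abs_of_pos (by positivity), div_lt_one h1ρ]; linarith
  have hlog : -log (1 - ρ / (1 + ρ)) = log (1 + ρ) := by
    rw [show 1 - ρ / (1 + ρ) = (1 + ρ)⁻¹ by field_simp; ring, log_inv, neg_neg]
  have hsplit : ∀ l ∈ Ico 1 r, ((r : ℝ) - l) / l * (ρ / (1 + ρ)) ^ l
      = r * ((ρ / (1 + ρ)) ^ l / l) - (ρ / (1 + ρ)) ^ l := by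
    intro l hl
    have : (l : ℝ) ≠ 0 := Nat.cast_ne_zero.mpr (by simp at hl; omega)
    field_simp
  have htail := sum_Ico_pow_div_add_tsum hx r
  simp only [hlog, Nat.cast_add] at htail
  rw [Icc_sub_one_right_eq_Ico_of_not_isMin (by simpa using Nat.one_le_iff_ne_zero.mp hr),
    sum_congr rfl hsplit, sum_sub_distrib, ← mul_sum, sum_Ico_div_one_add_pow h1ρ.ne' hr, ← htail]
  simp only [one_div_mul_eq_div]
  ring

theorem stmt_1 (ρ : ℝ) (hρ0 : 0 < ρ) (hρ1 : ρ < 1) (r : ℕ) (hr : 1 ≤ r) :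
    ∑ l ∈ Finset.Icc 1 (r-1), (((r:ℝ)-l)/l) * (ρ/(1+ρ))^l
      = r * Real.log (1+ρ) - ρ + ρ^r * (1+ρ)^((1:ℤ)-r)
        - r * ∑' n : ℕ, (1/((n:ℝ)+r)) * (ρ/(1+ρ))^(n+r) :=
  stmt_1_general ρ hρ0 r hr
end

section
/- For 0 < ρ < 1 and any integer r ≥ 1, Σ_{n=1}^∞ (n/(n+r))(ρ/(1+ρ))^n = (ρ(1+ρ)^r / r!) · Σ_{L=0}^∞ (-ρ)^L ((L+r)!/L!) (1/(L+r+1) + ρ/(L+r+2)). -/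
/-!
Both sides equal `ρ ∫₀¹ φ(t)^r dt` with `φ(t) = (1+ρ)t/(1+ρt)`. With `x = ρ/(1+ρ)`, the `n`-th
term on the left is `∫₀¹ n xⁿ u^(n+r-1) du`, and these integrands sum to `x u^r/(1-xu)²`, which
the substitution `u = φ(t)` turns into `ρ φ(t)^r`. The `L`-th term on the right is the integral
of `(-ρ)^L (L+r)!/L! t^(L+r)(1+ρt)`, and the binomial series `∑ C(L+r,r) z^L = (1-z)^(-r-1)` at
`z = -ρt` sums these to `r! (t/(1+ρt))^r`. Both interchanges of sum and integral are dominated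
by geometric series.
-/

open Set intervalIntegral
open scoped Interval Nat

theorem hasSum_intervalIntegral_of_norm_le_summable {E : Type*} [NormedAddCommGroup E]
    [NormedSpace ℝ E] {F : ℕ → ℝ → E} {f : ℝ → E} {c : ℕ → ℝ} {a b : ℝ}
    (hF : ∀ n, ContinuousOn (F n) [[a, b]]) (hFc : ∀ n, ∀ t ∈ [[a, b]], ‖F n t‖ ≤ c n)
    (hc : Summable c) (hFf : ∀ t ∈ [[a, b]], HasSum (F · t) (f t)) :
    HasSum (fun n => ∫ t in a..b, F n t) (∫ t in a..b, f t) :=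
  hasSum_integral_of_dominated_convergence (fun n _ => c n)
    (fun n => ((hF n).mono uIoc_subset_uIcc).aestronglyMeasurable measurableSet_uIoc)
    (fun n => .of_forall fun t ht => hFc n t (uIoc_subset_uIcc ht))
    (.of_forall fun _ _ => hc) intervalIntegrable_const
    (.of_forall fun t ht => hFf t (uIoc_subset_uIcc ht))

theorem Nat.cast_factorial_add_div_factorial (L r : ℕ) :
    ((L + r)! / L ! : ℝ) = r ! * (L + r).choose r := by
  rw [← Nat.choose_symm_add, Nat.cast_add_choose]
  field_simp

theorem hasSum_div_add_mul_pow_succ {x : ℝ} (hx : |x| < 1) (r : ℕ) :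
    HasSum (fun n : ℕ => ((n : ℝ) + 1) / ((n + 1) + r) * x ^ (n + 1))
      (∫ u in (0 : ℝ)..1, x * u ^ r / (1 - x * u) ^ 2) := by
  have hxu : ∀ u ∈ [[(0 : ℝ), 1]], ‖x * u‖ < 1 := fun u hu => by
    rw [uIcc_of_le zero_le_one] at hu
    rw [norm_mul, Real.norm_eq_abs, Real.norm_of_nonneg hu.1]
    nlinarith [abs_nonneg x, hu.2]
  have hterm : ∀ n : ℕ, ((n : ℝ) + 1) / ((n + 1) + r) * x ^ (n + 1)
      = ∫ u in (0 : ℝ)..1, (n + 1) * x ^ (n + 1) * u ^ (n + r) := by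
    intro n
    rw [integral_const_mul, integral_pow]
    push_cast
    ring
  simp_rw [hterm]
  refine hasSum_intervalIntegral_of_norm_le_summable (c := fun n => (n + 1) * |x| ^ (n + 1))
    (fun n => by fun_prop) (fun n u hu => ?_) ?_ (fun u hu => ?_)
  · rw [uIcc_of_le zero_le_one] at hu
    rw [norm_mul, norm_mul, norm_pow, norm_pow, Real.norm_of_nonneg hu.1,
      Real.norm_of_nonneg n.cast_add_one_pos.le, Real.norm_eq_abs]
    exact mul_le_of_le_one_right (by positivity) (pow_le_one₀ hu.1 hu.2)
  · have hx' : ‖|x|‖ < 1 := by rwa [Real.norm_eq_abs, abs_abs]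
    refine ((summable_choose_mul_geometric_of_norm_lt_one 1 hx').mul_left |x|).congr fun n => ?_
    rw [Nat.choose_one_right]
    push_cast
    ring
  · have h := (hasSum_choose_mul_geometric_of_norm_lt_one 1 (hxu u hu)).mul_left (x * u ^ r)
    rw [mul_one_div, one_add_one_eq_two] at h
    refine h.congr_fun fun n => ?_
    rw [Nat.choose_one_right]
    push_cast
    ring

theorem one_add_mul_pos {ρ t : ℝ} (hρ : -1 < ρ) (ht : t ∈ Icc (0 : ℝ) 1) : 0 < 1 + ρ * t := by
  rcases le_total 0 ρ with h | h
  · nlinarith [mul_nonneg h ht.1]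
  · nlinarith [mul_le_mul_of_nonpos_left ht.2 h]

theorem hasSum_neg_pow_factorial_div_mul {ρ : ℝ} (hρ : |ρ| < 1) (r : ℕ) :
    HasSum (fun L : ℕ => (-ρ) ^ L * ((L + r)! / L ! : ℝ) *
        (1 / ((L : ℝ) + r + 1) + ρ / ((L : ℝ) + r + 2)))
      (r ! * ∫ t in (0 : ℝ)..1, (t / (1 + ρ * t)) ^ r) := by
  obtain ⟨hρ₀, hρ₁⟩ := abs_lt.1 hρ
  have hterm : ∀ L : ℕ, (-ρ) ^ L * ((L + r)! / L ! : ℝ) *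
        (1 / ((L : ℝ) + r + 1) + ρ / ((L : ℝ) + r + 2))
      = ∫ t in (0 : ℝ)..1, (-ρ) ^ L * ((L + r)! / L ! : ℝ) * (t ^ (L + r) * (1 + ρ * t)) := by
    intro L
    simp_rw [integral_const_mul, mul_add, mul_one, ← mul_assoc, mul_comm _ ρ, mul_assoc ρ,
      ← pow_succ]
    rw [integral_add (Continuous.intervalIntegrable (by fun_prop) _ _)
      (Continuous.intervalIntegrable (by fun_prop) _ _), integral_const_mul, integral_pow,
      integral_pow]
    push_cast
    ring
  simp_rw [hterm, ← integral_const_mul]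
  refine hasSum_intervalIntegral_of_norm_le_summable
    (c := fun L => ‖(-ρ) ^ L * ((L + r)! / L ! : ℝ)‖ * 2)
    (fun L => by fun_prop) (fun L t ht => ?_) ?_ (fun t ht => ?_)
  · rw [uIcc_of_le zero_le_one] at ht
    have hlin : |1 + ρ * t| ≤ 2 := abs_le.2 ⟨by nlinarith [ht.1, ht.2], by nlinarith [ht.1, ht.2]⟩
    have hpow : t ^ (L + r) ≤ 1 := pow_le_one₀ ht.1 ht.2
    have h2 : ‖t ^ (L + r) * (1 + ρ * t)‖ ≤ 2 := by
      rw [norm_mul, norm_pow, Real.norm_of_nonneg ht.1, Real.norm_eq_abs]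
      nlinarith [abs_nonneg (1 + ρ * t), pow_nonneg ht.1 (L + r)]
    rw [norm_mul]
    exact mul_le_mul_of_nonneg_left h2 (norm_nonneg _)
  · have hρ' : ‖|ρ|‖ < 1 := by rwa [Real.norm_eq_abs, abs_abs]
    refine ((summable_choose_mul_geometric_of_norm_lt_one r hρ').mul_left (2 * r ! : ℝ)).congr
      fun L => ?_
    rw [Nat.cast_factorial_add_div_factorial, norm_mul, norm_pow, norm_neg, Real.norm_eq_abs,
      Real.norm_of_nonneg (by positivity)]
    ring
  · rw [uIcc_of_le zero_le_one] at ht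
    have hden := one_add_mul_pos hρ₀ ht
    have hρt : ‖-ρ * t‖ < 1 := by
      rw [norm_mul, norm_neg, Real.norm_eq_abs, Real.norm_of_nonneg ht.1]
      nlinarith [abs_nonneg ρ, ht.2]
    have h := (hasSum_choose_mul_geometric_of_norm_lt_one r hρt).mul_left
      (r ! * (t ^ r * (1 + ρ * t)))
    have hval : r ! * (t ^ r * (1 + ρ * t)) * (1 / (1 - -ρ * t) ^ (r + 1))
        = r ! * (t / (1 + ρ * t)) ^ r := by
      rw [neg_mul, sub_neg_eq_add, div_pow, pow_succ]
      field_simp [hden.ne']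
    rw [hval] at h
    refine h.congr_fun fun L => ?_
    rw [Nat.cast_factorial_add_div_factorial]
    ring

theorem integral_mobius_pow_eq {ρ : ℝ} (hρ : -1 < ρ) (r : ℕ) :
    ∫ t in (0 : ℝ)..1, ((1 + ρ) * t / (1 + ρ * t)) ^ r
      = ∫ u in (0 : ℝ)..1, (1 + ρ) * u ^ r / (1 + ρ * (1 - u)) ^ 2 := by
  have hden : ∀ t ∈ [[(0 : ℝ), 1]], 0 < 1 + ρ * t := fun t ht =>
    one_add_mul_pos hρ (by rwa [uIcc_of_le zero_le_one] at ht)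
  have hφ : ∀ t ∈ [[(0 : ℝ), 1]],
      HasDerivAt (fun s => (1 + ρ) * s / (1 + ρ * s)) ((1 + ρ) / (1 + ρ * t) ^ 2) t := by
    intro t ht
    refine (((hasDerivAt_id t).const_mul (1 + ρ)).div
      (((hasDerivAt_id t).const_mul ρ).const_add 1) (hden t ht).ne').congr_deriv ?_
    simp only [id]
    ring
  have hmaps : (fun s => (1 + ρ) * s / (1 + ρ * s)) '' [[(0 : ℝ), 1]] ⊆ [[0, 1]] := by
    rintro _ ⟨t, ht, rfl⟩
    have h := hden t ht
    rw [uIcc_of_le zero_le_one] at ht ⊢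
    exact ⟨div_nonneg (by nlinarith [ht.1]) h.le, (div_le_one h).2 (by nlinarith [ht.2])⟩
  have hg : ContinuousOn (fun u => (1 + ρ) * u ^ r / (1 + ρ * (1 - u)) ^ 2) [[0, 1]] := by
    refine ContinuousOn.div (by fun_prop) (by fun_prop) fun u hu => ?_
    rw [uIcc_of_le zero_le_one] at hu
    have := one_add_mul_pos hρ ⟨sub_nonneg.2 hu.2, sub_le_self 1 hu.1⟩
    positivity
  have hsubst := integral_comp_mul_deriv' hφ
    (ContinuousOn.div (by fun_prop) (by fun_prop) fun t ht => (pow_pos (hden t ht) 2).ne')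
    (hg.mono hmaps)
  rw [mul_zero, mul_zero, add_zero, zero_div, mul_one, mul_one, div_self (by linarith)] at hsubst
  rw [← hsubst]
  refine integral_congr fun t ht => ?_
  have h := (hden t ht).ne'
  have hρ' : 1 + ρ ≠ 0 := by linarith
  have hkey : 1 + ρ * (1 - (1 + ρ) * t / (1 + ρ * t)) = (1 + ρ) / (1 + ρ * t) := by
    field_simp
    ring
  simp only [Function.comp_apply, hkey]
  rw [div_pow, mul_pow]
  field_simp

theorem stmt_2_general (ρ : ℝ) (hρ0 : 0 < ρ) (hρ1 : ρ < 1) (r : ℕ) :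
    ∑' n : ℕ, (((n:ℝ)+1)/(((n:ℝ)+1)+r)) * (ρ/(1+ρ))^(n+1)
      = (ρ * (1+ρ)^r / (Nat.factorial r)) *
        ∑' L : ℕ, (-ρ)^L * ((Nat.factorial (L+r) : ℝ)/(Nat.factorial L)) *
          (1/((L:ℝ)+r+1) + ρ/((L:ℝ)+r+2)) := by
  have hρ : |ρ| < 1 := abs_lt.2 ⟨by linarith, hρ1⟩
  have hx : |ρ / (1 + ρ)| < 1 := by
    rw [abs_of_pos (by positivity), div_lt_one (by positivity)]
    linarith
  rw [(hasSum_div_add_mul_pow_succ hx r).tsum_eq, (hasSum_neg_pow_factorial_div_mul hρ r).tsum_eq]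
  have hlhs : ∀ u : ℝ, ρ / (1 + ρ) * u ^ r / (1 - ρ / (1 + ρ) * u) ^ 2
      = ρ * ((1 + ρ) * u ^ r / (1 + ρ * (1 - u)) ^ 2) := fun u => by
    field_simp
    ring
  have hrhs : ∀ t : ℝ, ((1 + ρ) * t / (1 + ρ * t)) ^ r = (1 + ρ) ^ r * (t / (1 + ρ * t)) ^ r :=
    fun t => by rw [mul_div_assoc, mul_pow]
  simp_rw [hlhs, integral_const_mul, ← integral_mobius_pow_eq (by linarith : -1 < ρ), hrhs,
    integral_const_mul]
  field_simp

theorem stmt_2 (ρ : ℝ) (hρ0 : 0 < ρ) (hρ1 : ρ < 1) (r : ℕ) (hr : 1 ≤ r) :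
    ∑' n : ℕ, (((n:ℝ)+1)/(((n:ℝ)+1)+r)) * (ρ/(1+ρ))^(n+1)
      = (ρ * (1+ρ)^r / (Nat.factorial r)) *
        ∑' L : ℕ, (-ρ)^L * ((Nat.factorial (L+r) : ℝ)/(Nat.factorial L)) *
          (1/((L:ℝ)+r+1) + ρ/((L:ℝ)+r+2)) :=
  stmt_2_general ρ hρ0 hρ1 r
end

section
/- For 0 < ρ < 1 and any integer r ≥ 1, ((1-ρ)/(1+ρ)) ρ^r Σ_{n=0}^∞ (n/(r+n)) (ρ/(1+ρ))^n = (1-ρ) ρ^{r+1} ∫₀¹ u^r/(1+ρ-uρ)² du; that is, the series representation of π(0,r) for m=1 equals its integral representation. -/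
/-!
Put `x = ρ / (1 + ρ)`, so that `1 + ρ - u ρ = (1 + ρ)(1 - x u)`. Expanding
`1 / (1 - x u)² = ∑ (n + 1) (x u)ⁿ` and integrating termwise (dominated by `∑ (n + 1) |x|ⁿ`) gives
`∫₀¹ uʳ / (1 - x u)² du = ∑ (n + 1) xⁿ / (n + r + 1)`, and shifting the index of the series on the
left by one turns it into `x` times the same sum.
-/

theorem hasSum_succ_mul_geometric_of_norm_lt_one {𝕜 : Type*} [NormedField 𝕜] [CompleteSpace 𝕜]
    {t : 𝕜} (ht : ‖t‖ < 1) :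
    HasSum (fun n : ℕ ↦ (n + 1) * t ^ n) (1 / (1 - t) ^ 2) := by
  simpa using hasSum_choose_mul_geometric_of_norm_lt_one 1 ht

theorem hasSum_integral_pow_div_one_sub_mul_sq (r : ℕ) {t : ℝ} (ht : |t| < 1) :
    HasSum (fun n : ℕ ↦ (n + 1) * t ^ n / (n + r + 1))
      (∫ u in (0 : ℝ)..1, u ^ r / (1 - t * u) ^ 2) := by
  have hterm (n : ℕ) :
      ∫ u in (0 : ℝ)..1, (n + 1) * t ^ n * u ^ (n + r) = (n + 1) * t ^ n / (n + r + 1) := by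
    rw [intervalIntegral.integral_const_mul, integral_pow]
    push_cast
    ring
  simp_rw [← hterm]
  refine intervalIntegral.hasSum_integral_of_dominated_convergence
    (fun n _ ↦ (n + 1) * |t| ^ n) (fun n ↦ by fun_prop) (fun n ↦ ?_) ?_
    intervalIntegrable_const ?_
  · refine .of_forall fun u hu ↦ ?_
    rw [Set.uIoc_of_le zero_le_one] at hu
    have hn : |(n : ℝ) + 1| = n + 1 := abs_of_nonneg (by positivity)
    simp only [norm_mul, norm_pow, Real.norm_eq_abs, abs_of_nonneg hu.1.le, hn]
    exact mul_le_of_le_one_right (by positivity) (pow_le_one₀ hu.1.le hu.2)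
  · exact .of_forall fun _ _ ↦
      (hasSum_succ_mul_geometric_of_norm_lt_one (t := |t|) (by simpa using ht)).summable
  · refine .of_forall fun u hu ↦ ?_
    rw [Set.uIoc_of_le zero_le_one] at hu
    have htu : ‖t * u‖ < 1 := by
      rw [norm_mul, Real.norm_eq_abs, Real.norm_eq_abs, abs_of_pos hu.1]
      exact (mul_le_of_le_one_right (abs_nonneg t) hu.2).trans_lt ht
    convert! (hasSum_succ_mul_geometric_of_norm_lt_one htu).mul_left (u ^ r) using 1
    · funext n; ring
    · ring

theorem hasSum_div_add_mul_pow_of_hasSum (r : ℕ) {t s : ℝ}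
    (h : HasSum (fun n : ℕ ↦ (n + 1) * t ^ n / (n + r + 1)) s) :
    HasSum (fun n : ℕ ↦ (n / (r + n)) * t ^ n) (t * s) := by
  rw [← hasSum_nat_add_iff' 1]
  convert! h.mul_left t using 1
  · ext n; push_cast; ring
  · simp

theorem stmt_3_general (ρ : ℝ) (hρ0 : 0 < ρ) (r : ℕ) :
    ((1-ρ)/(1+ρ)) * ρ^r * ∑' n : ℕ, ((n:ℝ)/((r:ℝ)+n)) * (ρ/(1+ρ))^n
      = (1-ρ) * ρ^(r+1) * ∫ u in (0:ℝ)..1, u^r/(1+ρ-u*ρ)^2 := by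
  have hx : |ρ / (1 + ρ)| < 1 := by
    rw [abs_of_pos (by positivity), div_lt_one (by positivity)]
    linarith
  have hI := hasSum_integral_pow_div_one_sub_mul_sq r hx
  have hrescale : ∫ u in (0:ℝ)..1, u ^ r / (1 + ρ - u * ρ) ^ 2
      = (∫ u in (0:ℝ)..1, u ^ r / (1 - ρ / (1 + ρ) * u) ^ 2) / (1 + ρ) ^ 2 := by
    rw [← intervalIntegral.integral_div]
    congr 1 with u
    field_simp
  rw [(hasSum_div_add_mul_pow_of_hasSum r hI).tsum_eq, hrescale]
  field_simp
  ring

theorem stmt_3 (ρ : ℝ) (hρ0 : 0 < ρ) (hρ1 : ρ < 1) (r : ℕ) (hr : 1 ≤ r) :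
    ((1-ρ)/(1+ρ)) * ρ^r * ∑' n : ℕ, ((n:ℝ)/((r:ℝ)+n)) * (ρ/(1+ρ))^n
      = (1-ρ) * ρ^(r+1) * ∫ u in (0:ℝ)..1, u^r/(1+ρ-u*ρ)^2 :=
  stmt_3_general ρ hρ0 r
end

section
/- Define, for 0 < ρ < 1 and integers r ≥ 1, π₀(r) = (1-ρ)(1+ρ)^{r-1} ∫₁^{1+ρ} (1-1/u)^r du and π₁(r) = (1-ρ)(1+ρ)^r (r+1) ∫₁^{1+ρ} (1/u)(1-1/u)^r du. Then for all r ≥ 0, π₀(r+1) + π₁(r) = (1-ρ)ρ^{r+1}, where π₀(0) := 1-ρ is not needed since r+1 ≥ 1. -/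
/-!
Both integrands come from one exact derivative:
`d/du [u (1 - 1/u)^(r+1)] = (1 - 1/u)^(r+1) + (r+1) (1/u) (1 - 1/u)^r`.
Integrating over `[1, 1+ρ]` gives `(1+ρ) (ρ/(1+ρ))^(r+1)`, and the prefactor
`(1-ρ) (1+ρ)^r` shared by `π₀ (r+1)` and `π₁ r` turns this into `(1-ρ) ρ^(r+1)`.
-/

open intervalIntegral

theorem hasDerivAt_mul_one_sub_inv_pow {u : ℝ} (hu : u ≠ 0) (n : ℕ) :
    HasDerivAt (fun u : ℝ => u * (1 - 1/u) ^ (n+1))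
      ((1 - 1/u) ^ (n+1) + ((n:ℝ) + 1) * (1/u * (1 - 1/u) ^ n)) u := by
  have hinner : HasDerivAt (fun u : ℝ => 1 - 1/u) (1/u ^ 2) u := by
    simpa [one_div] using (hasDerivAt_inv hu).const_sub 1
  refine ((hasDerivAt_id' u).mul (hinner.pow (n+1))).congr_deriv ?_
  rw [Nat.add_sub_cancel, Pi.pow_apply]
  push_cast
  field_simp

theorem integral_one_sub_inv_pow_add {a b : ℝ} (h0 : (0:ℝ) ∉ Set.uIcc a b) (n : ℕ) :
    (∫ u in a..b, (1 - 1/u) ^ (n+1)) + ((n:ℝ) + 1) * ∫ u in a..b, 1/u * (1 - 1/u) ^ n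
      = b * (1 - 1/b) ^ (n+1) - a * (1 - 1/a) ^ (n+1) := by
  have hne : ∀ u ∈ Set.uIcc a b, u ≠ 0 := fun u hu h => h0 (h ▸ hu)
  have hinv : ContinuousOn (fun u : ℝ => 1/u) (Set.uIcc a b) :=
    continuousOn_const.div continuousOn_id hne
  have hbase : ContinuousOn (fun u : ℝ => 1 - 1/u) (Set.uIcc a b) := continuousOn_const.sub hinv
  have hint₀ : IntervalIntegrable (fun u : ℝ => (1 - 1/u) ^ (n+1)) MeasureTheory.volume a b :=
    (hbase.pow _).intervalIntegrable
  have hint₁ : IntervalIntegrable (fun u : ℝ => 1/u * (1 - 1/u) ^ n) MeasureTheory.volume a b :=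
    (hinv.mul (hbase.pow _)).intervalIntegrable
  rw [← integral_const_mul, ← integral_add hint₀ (hint₁.const_mul _)]
  exact integral_eq_sub_of_hasDerivAt
    (fun u hu => hasDerivAt_mul_one_sub_inv_pow (hne u hu) n) (hint₀.add (hint₁.const_mul _))

theorem one_add_pow_mul_integral_one_sub_inv_pow_add {ρ : ℝ} (hρ : -1 < ρ) (n : ℕ) :
    (1 + ρ) ^ n * ((∫ u in (1:ℝ)..(1+ρ), (1 - 1/u) ^ (n+1))
      + ((n:ℝ) + 1) * ∫ u in (1:ℝ)..(1+ρ), 1/u * (1 - 1/u) ^ n) = ρ ^ (n+1) := by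
  have h0 : (0:ℝ) ∉ Set.uIcc 1 (1+ρ) := by
    rw [Set.mem_uIcc]; rintro (⟨h, -⟩ | ⟨h, -⟩) <;> linarith
  have hne : 1 + ρ ≠ 0 := by linarith
  rw [integral_one_sub_inv_pow_add h0 n, show (1:ℝ) - 1/(1+ρ) = ρ/(1+ρ) by field_simp; ring,
    div_pow]
  field_simp
  ring

theorem stmt_6_general (ρ : ℝ) (hρ0 : 0 < ρ)
    (π₀ π₁ : ℕ → ℝ)
    (hπ₀ : ∀ r : ℕ, 1 ≤ r →
      π₀ r = (1-ρ) * (1+ρ)^(r-1) * ∫ u in (1:ℝ)..(1+ρ), (1-1/u)^r)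
    (hπ₁ : ∀ r : ℕ,
      π₁ r = (1-ρ) * (1+ρ)^r * ((r:ℝ)+1) * ∫ u in (1:ℝ)..(1+ρ), (1/u)*(1-1/u)^r) :
    ∀ r : ℕ, π₀ (r+1) + π₁ r = (1-ρ) * ρ^(r+1) := by
  intro r
  rw [hπ₀ (r+1) r.succ_pos, hπ₁ r, Nat.add_sub_cancel,
    ← one_add_pow_mul_integral_one_sub_inv_pow_add (by linarith) r]
  ring

theorem stmt_6 (ρ : ℝ) (hρ0 : 0 < ρ) (hρ1 : ρ < 1)
    (π₀ π₁ : ℕ → ℝ)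
    (hπ₀ : ∀ r : ℕ, 1 ≤ r →
      π₀ r = (1-ρ) * (1+ρ)^(r-1) * ∫ u in (1:ℝ)..(1+ρ), (1-1/u)^r)
    (hπ₁ : ∀ r : ℕ,
      π₁ r = (1-ρ) * (1+ρ)^r * ((r:ℝ)+1) * ∫ u in (1:ℝ)..(1+ρ), (1/u)*(1-1/u)^r) :
    ∀ r : ℕ, π₀ (r+1) + π₁ r = (1-ρ) * ρ^(r+1) :=
  stmt_6_general ρ hρ0 π₀ π₁ hπ₀ hπ₁
end

section
/- For 0 < ρ < 1, the function f₀(y) = (1-ρ)/((1+ρ)y-1)² · {(1+ρ)y² - (2+ρ)y - y·log[(1+ρ)(1-ρy)] + 1} and f₁ defined by f₁ = (1+ρ)f₀ + ((1+ρ)y-1)f₀' - (1-ρ) satisfy the ODE -2ρ f₀ - ρ y f₀' = [3ρy - 2(1+ρ)] f₁ + [ρy² - (1+ρ)y + 1] f₁' on the interval 0 < y < 1/(1+ρ). -/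
/-!
Write `u = (1+ρ)y - 1` and let `N` be the bracket in `f₀`, so `f₀ = (1-ρ) N / u²`. Then
`(1+ρ) f₀ + u f₀' = (1-ρ) M / u²` with `M = N' u - (1+ρ) N`, and the `(1+ρ) N'` terms cancel in
`M' = N'' u`. Multiplying by `u³ / (1-ρ)`, the ODE becomes an identity between `N`, `N'`, `N''`.
The logarithm enters `N` and `N'` linearly, and its coefficients cancel, so this is an identity of
rational functions in `y`, checked by clearing the denominators `1 - ρy`.
-/

open Real Set Filter

noncomputable def numer (ρ y : ℝ) : ℝ :=
  (1+ρ)*y^2 - (2+ρ)*y - y * log ((1+ρ)*(1-ρ*y)) + 1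

noncomputable def numerDeriv (ρ y : ℝ) : ℝ :=
  2*(1+ρ)*y - (2+ρ) - log ((1+ρ)*(1-ρ*y)) + ρ*y/(1-ρ*y)

noncomputable def numerDeriv2 (ρ y : ℝ) : ℝ :=
  2*(1+ρ) + ρ/(1-ρ*y) + ρ/(1-ρ*y)^2

theorem hasDerivAt_log_mul_one_sub {c ρ y : ℝ} (hc : c ≠ 0) (hw : 1 - ρ*y ≠ 0) :
    HasDerivAt (fun t => log (c*(1-ρ*t))) (-ρ/(1-ρ*y)) y := by
  have h := ((((hasDerivAt_id y).const_mul ρ).const_sub 1).const_mul c).log (mul_ne_zero hc hw)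
  refine h.congr_deriv ?_
  simp only [id_eq]
  field_simp

theorem hasDerivAt_numer {ρ y : ℝ} (hc : 1+ρ ≠ 0) (hw : 1 - ρ*y ≠ 0) :
    HasDerivAt (numer ρ) (numerDeriv ρ y) y := by
  have h := ((((hasDerivAt_pow 2 y).const_mul (1+ρ)).sub ((hasDerivAt_id y).const_mul (2+ρ))).sub
    ((hasDerivAt_id y).mul (hasDerivAt_log_mul_one_sub hc hw))).add_const 1
  refine h.congr_deriv ?_
  simp only [numerDeriv, id_eq]
  field_simp
  ring

theorem hasDerivAt_numerDeriv {ρ y : ℝ} (hc : 1+ρ ≠ 0) (hw : 1 - ρ*y ≠ 0) :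
    HasDerivAt (numerDeriv ρ) (numerDeriv2 ρ y) y := by
  have hw' : HasDerivAt (fun t => 1 - ρ*t) (-ρ) y := by
    simpa using ((hasDerivAt_id y).const_mul ρ).const_sub 1
  have h := ((((hasDerivAt_id y).const_mul (2*(1+ρ))).sub_const (2+ρ)).sub
    (hasDerivAt_log_mul_one_sub hc hw)).add (((hasDerivAt_id y).const_mul ρ).div hw' hw)
  refine h.congr_deriv ?_
  simp only [numerDeriv2, id_eq]
  field_simp
  ring

theorem hasDerivAt_numerDeriv_mul_sub {ρ y : ℝ} (hc : 1+ρ ≠ 0) (hw : 1 - ρ*y ≠ 0) :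
    HasDerivAt (fun t => numerDeriv ρ t * ((1+ρ)*t - 1) - (1+ρ) * numer ρ t)
      (numerDeriv2 ρ y * ((1+ρ)*y - 1)) y := by
  have hl : HasDerivAt (fun t => (1+ρ)*t - 1) (1+ρ) y := by
    simpa using ((hasDerivAt_id y).const_mul (1+ρ)).sub_const 1
  refine (((hasDerivAt_numerDeriv hc hw).mul hl).sub
    ((hasDerivAt_numer hc hw).const_mul (1+ρ))).congr_deriv ?_
  ring

theorem HasDerivAt.const_div_linear_pow_mul {g : ℝ → ℝ} {g' a b c y : ℝ} (k : ℕ)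
    (hg : HasDerivAt g g' y) (hy : a*y - b ≠ 0) :
    HasDerivAt (fun t => c/(a*t-b)^k * g t) (c * (g' * (a*y-b) - k*a*g y) / (a*y-b)^(k+1)) y := by
  have hl : HasDerivAt (fun t => a*t - b) a y := by
    simpa using ((hasDerivAt_id y).const_mul a).sub_const b
  have h := ((hasDerivAt_const y c).fun_div (hl.fun_pow k) (pow_ne_zero k hy)).fun_mul hg
  refine h.congr_deriv ?_
  rcases k with _ | k
  · simp [field]
  · field_simp
    push_cast
    ring

theorem numer_ode {ρ y u : ℝ} (hw : 1 - ρ*y ≠ 0) (hu : u = (1+ρ)*y - 1) :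
    -2*ρ*numer ρ y * u - ρ*y*(numerDeriv ρ y * u - 2*(1+ρ)*numer ρ y)
      = (3*ρ*y - 2*(1+ρ)) * ((numerDeriv ρ y * u - (1+ρ) * numer ρ y)*u - u^3)
        + (ρ*y^2 - (1+ρ)*y + 1)
          * (numerDeriv2 ρ y * u^2 - 2*(1+ρ)*(numerDeriv ρ y * u - (1+ρ) * numer ρ y)) := by
  subst hu
  simp only [numer, numerDeriv, numerDeriv2]
  field_simp
  ring

theorem ne_zero_of_mem_Ioo_one_div {ρ y : ℝ} (hy : y ∈ Ioo 0 (1/(1+ρ))) :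
    1+ρ ≠ 0 ∧ (1+ρ)*y - 1 ≠ 0 ∧ 1 - ρ*y ≠ 0 := by
  obtain ⟨hy0, hy1⟩ := hy
  have hc : 0 < 1+ρ := one_div_pos.mp (hy0.trans hy1)
  have hu : y * (1+ρ) < 1 := (lt_div_iff₀ hc).mp (by simpa using hy1)
  exact ⟨hc.ne', by linarith, by linarith⟩

theorem stmt_8_general (ρ : ℝ)
    (f₀ f₁ : ℝ → ℝ)
    (hf₀ : ∀ y : ℝ, f₀ y = (1-ρ)/((1+ρ)*y-1)^2 *
      ((1+ρ)*y^2 - (2+ρ)*y - y * Real.log ((1+ρ)*(1-ρ*y)) + 1))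
    (hf₁ : ∀ y : ℝ, f₁ y = (1+ρ) * f₀ y + ((1+ρ)*y-1) * deriv f₀ y - (1-ρ)) :
    ∀ y : ℝ, 0 < y → y < 1/(1+ρ) →
      -2*ρ*(f₀ y) - ρ*y*(deriv f₀ y)
        = (3*ρ*y - 2*(1+ρ)) * (f₁ y) + (ρ*y^2 - (1+ρ)*y + 1) * (deriv f₁ y) := by
  intro y hy0 hy1
  have hf₀N : ∀ t, f₀ t = (1-ρ)/((1+ρ)*t-1)^2 * numer ρ t := hf₀
  have hf₀' : ∀ t ∈ Ioo 0 (1/(1+ρ)), HasDerivAt f₀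
      ((1-ρ) * (numerDeriv ρ t * ((1+ρ)*t-1) - 2*(1+ρ)*numer ρ t) / ((1+ρ)*t-1)^3) t := by
    intro t ht
    obtain ⟨hc, hu, hw⟩ := ne_zero_of_mem_Ioo_one_div ht
    rw [funext hf₀N]
    exact ((hasDerivAt_numer hc hw).const_div_linear_pow_mul 2 hu).congr_deriv (by norm_num)
  have hf₁M : ∀ t ∈ Ioo 0 (1/(1+ρ)), f₁ t = (1-ρ)/((1+ρ)*t-1)^2 *
      (numerDeriv ρ t * ((1+ρ)*t - 1) - (1+ρ) * numer ρ t) - (1-ρ) := by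
    intro t ht
    have hu := (ne_zero_of_mem_Ioo_one_div ht).2.1
    rw [hf₁, (hf₀' t ht).deriv, hf₀N]
    field_simp
    ring
  have hy : y ∈ Ioo 0 (1/(1+ρ)) := ⟨hy0, hy1⟩
  obtain ⟨hc, hu, hw⟩ := ne_zero_of_mem_Ioo_one_div hy
  have hf₁' := (((hasDerivAt_numerDeriv_mul_sub hc hw).const_div_linear_pow_mul (c := 1-ρ) 2
    hu).sub_const (1-ρ)).congr_of_eventuallyEq (eventuallyEq_of_mem (Ioo_mem_nhds hy0 hy1) hf₁M)
  rw [hf₁ y, (hf₀' y hy).deriv, hf₁'.deriv, hf₀N y]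
  field_simp
  linear_combination (1-ρ) * ((1+ρ)*y-1)^3 * numer_ode hw rfl

theorem stmt_8 (ρ : ℝ) (hρ0 : 0 < ρ) (hρ1 : ρ < 1)
    (f₀ f₁ : ℝ → ℝ)
    (hf₀ : ∀ y : ℝ, f₀ y = (1-ρ)/((1+ρ)*y-1)^2 *
      ((1+ρ)*y^2 - (2+ρ)*y - y * Real.log ((1+ρ)*(1-ρ*y)) + 1))
    (hf₁ : ∀ y : ℝ, f₁ y = (1+ρ) * f₀ y + ((1+ρ)*y-1) * deriv f₀ y - (1-ρ)) :
    ∀ y : ℝ, 0 < y → y < 1/(1+ρ) →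
      -2*ρ*(f₀ y) - ρ*y*(deriv f₀ y)
        = (3*ρ*y - 2*(1+ρ)) * (f₁ y) + (ρ*y^2 - (1+ρ)*y + 1) * (deriv f₁ y) :=
  stmt_8_general ρ f₀ f₁ hf₀ hf₁
end

section
/- For 0 < ρ < 1 and y with |y| < 1/(1+ρ), the function f₀(y) = (1-ρ)/((1+ρ)y-1)² · {(1+ρ)y² - (2+ρ)y - y·log[(1+ρ)(1-ρy)] + 1} has the integral representation f₀(y) = ((1-ρ)/(1+ρ)) · [1 + ∫₁^{1+ρ} u/(u - (1+ρ)(u-1)y) du]. -/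
/-! With `a = 1 - (1+ρ)y > 0` and `b = (1+ρ)y` the denominator is `a u + b = a (u - 1) + 1`, positive
on `[1, 1+ρ]`, and `u / (a u + b)` has the antiderivative `u / a - (b / a²) log (a u + b)`. At the
endpoints `a u + b` equals `(1+ρ)(1-ρy)` and `1`, and `a² = ((1+ρ)y - 1)²`, which gives the closed form. -/

open Real Set

theorem hasDerivAt_div_sub_mul_log {a b x : ℝ} (ha : a ≠ 0) (hx : a * x + b ≠ 0) :
    HasDerivAt (fun u => u / a - b / a ^ 2 * log (a * u + b)) (x / (a * x + b)) x := by
  have hlin : HasDerivAt (fun u => a * u + b) a x := by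
    simpa using ((hasDerivAt_id x).const_mul a).add_const b
  refine (((hasDerivAt_id' x).div_const a).sub
    (((hasDerivAt_log hx).comp x hlin).const_mul (b / a ^ 2))).congr_deriv ?_
  field_simp
  ring

theorem integral_div_linear {a b s t : ℝ} (ha : a ≠ 0) (h : ∀ x ∈ uIcc s t, a * x + b ≠ 0) :
    ∫ u in s..t, u / (a * u + b)
      = (t - s) / a - b / a ^ 2 * (log (a * t + b) - log (a * s + b)) := by
  have hcont : ContinuousOn (fun u => u / (a * u + b)) (uIcc s t) :=
    continuousOn_id.div (by fun_prop) h
  rw [intervalIntegral.integral_eq_sub_of_hasDerivAt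
    (fun x hx => hasDerivAt_div_sub_mul_log ha (h x hx)) hcont.intervalIntegrable]
  ring

theorem stmt_9_general (ρ : ℝ) (hρ0 : 0 < ρ) (y : ℝ) (hy : |y| < 1/(1+ρ)) :
    (1-ρ)/((1+ρ)*y-1)^2 *
      ((1+ρ)*y^2 - (2+ρ)*y - y * Real.log ((1+ρ)*(1-ρ*y)) + 1)
    = ((1-ρ)/(1+ρ)) * (1 + ∫ u in (1:ℝ)..(1+ρ), u/(u - (1+ρ)*(u-1)*y)) := by
  set a := 1 - (1+ρ)*y
  set b := (1+ρ)*y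
  have hb : b < 1 := by
    have := (abs_lt.mp hy).2
    rw [lt_div_iff₀ (by linarith)] at this
    linarith
  have ha : 0 < a := by linarith
  have hden : ∀ u ∈ uIcc 1 (1+ρ), a * u + b ≠ 0 := by
    intro u hu
    rw [uIcc_of_le (by linarith)] at hu
    have : a * u + b = a * (u - 1) + 1 := by ring
    nlinarith [hu.1]
  have hintegrand : (fun u => u / (u - (1+ρ)*(u-1)*y)) = fun u => u / (a * u + b) := by
    funext u; congr 1; simp only [a, b]; ring
  rw [hintegrand, integral_div_linear ha.ne' hden,
    show a * (1+ρ) + b = (1+ρ)*(1-ρ*y) by ring, show a * 1 + b = 1 by ring,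
    log_one, sub_zero, show ((1+ρ)*y-1)^2 = a^2 by ring]
  field_simp
  ring

theorem stmt_9 (ρ : ℝ) (hρ0 : 0 < ρ) (hρ1 : ρ < 1) (y : ℝ) (hy : |y| < 1/(1+ρ)) :
    (1-ρ)/((1+ρ)*y-1)^2 *
      ((1+ρ)*y^2 - (2+ρ)*y - y * Real.log ((1+ρ)*(1-ρ*y)) + 1)
    = ((1-ρ)/(1+ρ)) * (1 + ∫ u in (1:ℝ)..(1+ρ), u/(u - (1+ρ)*(u-1)*y)) :=
  stmt_9_general ρ hρ0 y hy
end

section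
/- Define for 0 < ρ < 1 and r ≥ 1: π₀(r) = (1-ρ)ρ^{r+1} ∫₀¹ u^r/(1+ρ-uρ)² du. Then lim_{r→∞} r·π₀(r)/ρ^{r+1} = 1-ρ, i.e., π₀(r) ~ (1-ρ)ρ^{r+1}/r as r → ∞. -/
theorem stmt_15 (ρ : ℝ) (hρ0 : 0 < ρ) (hρ1 : ρ < 1)
    (π₀ : ℕ → ℝ)
    (hπ₀ : ∀ r : ℕ, π₀ r = (1-ρ) * ρ^(r+1) * ∫ u in (0:ℝ)..1, u^r/(1+ρ-u*ρ)^2) :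
    Filter.Tendsto (fun r : ℕ => (r:ℝ) * π₀ r / ρ^(r+1))
      Filter.atTop (nhds (1-ρ)) := by
  set I : ℕ → ℝ := fun r => ∫ u in (0:ℝ)..1, u^r/(1+ρ-u*ρ)^2 with hI
  -- basic facts
  have hD : ∀ u ∈ Set.Icc (0:ℝ) 1, (1:ℝ) ≤ 1+ρ-u*ρ := by
    intro u hu
    nlinarith [hu.1, hu.2, hρ0.le]
  have hcont : ∀ r : ℕ, ContinuousOn (fun u : ℝ => u^r/(1+ρ-u*ρ)^2) (Set.Icc 0 1) := by
    intro r
    apply ContinuousOn.div (by fun_prop) (by fun_prop)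
    intro u hu
    have := hD u hu
    positivity
  have hint : ∀ (r : ℕ) (a b : ℝ), a ∈ Set.Icc (0:ℝ) 1 → b ∈ Set.Icc (0:ℝ) 1 →
      IntervalIntegrable (fun u : ℝ => u^r/(1+ρ-u*ρ)^2) MeasureTheory.volume a b := by
    intro r a b ha hb
    apply ContinuousOn.intervalIntegrable
    exact (hcont r).mono (Set.uIcc_subset_Icc ha hb)
  -- upper bound
  have hub : ∀ r : ℕ, (r:ℝ) * I r ≤ 1 := by
    intro r
    have h1 : I r ≤ ∫ u in (0:ℝ)..1, u^r := by
      apply intervalIntegral.integral_mono_on (by norm_num)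
        (hint r 0 1 (by norm_num) (by norm_num))
        (by apply Continuous.intervalIntegrable; fun_prop)
      intro u hu
      have h := hD u hu
      have hu0 : (0:ℝ) ≤ u := hu.1
      have : (1:ℝ) ≤ (1+ρ-u*ρ)^2 := by nlinarith
      exact div_le_self (by positivity) this
    have h2 : ∫ u in (0:ℝ)..1, (u:ℝ)^r = 1/(r+1) := by
      rw [integral_pow]; norm_num
    have h3 : (r:ℝ) * I r ≤ (r:ℝ) * (1/(r+1)) := by
      apply mul_le_mul_of_nonneg_left (h2 ▸ h1) (Nat.cast_nonneg r)
    have h4 : (r:ℝ) * (1/(r+1)) ≤ 1 := by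
      rw [mul_one_div, div_le_one (by positivity)]
      linarith
    linarith
  -- lower bound
  have hlb : ∀ (a : ℝ), a ∈ Set.Ico (0:ℝ) 1 → ∀ r : ℕ,
      (r:ℝ)/(r+1) * ((1/(1+ρ-a*ρ)^2) * (1 - a^(r+1))) ≤ (r:ℝ) * I r := by
    intro a ha r
    have ha0 : (0:ℝ) ≤ a := ha.1
    have ha1 : a < 1 := ha.2
    set c : ℝ := 1/(1+ρ-a*ρ)^2 with hc
    have haI : a ∈ Set.Icc (0:ℝ) 1 := ⟨ha0, ha1.le⟩
    have hDa : (1:ℝ) ≤ 1+ρ-a*ρ := hD a haI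
    have hsplit : I r = (∫ u in (0:ℝ)..a, u^r/(1+ρ-u*ρ)^2)
        + ∫ u in a..1, u^r/(1+ρ-u*ρ)^2 :=
      (intervalIntegral.integral_add_adjacent_intervals
        (hint r 0 a (by norm_num) haI) (hint r a 1 haI (by norm_num))).symm
    have h1 : (0:ℝ) ≤ ∫ u in (0:ℝ)..a, u^r/(1+ρ-u*ρ)^2 := by
      apply intervalIntegral.integral_nonneg ha0
      intro u hu
      have hu0 : (0:ℝ) ≤ u := hu.1
      have huI : u ∈ Set.Icc (0:ℝ) 1 := ⟨hu.1, hu.2.trans ha1.le⟩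
      have hDu : (0:ℝ) < 1+ρ-u*ρ := lt_of_lt_of_le one_pos (hD u huI)
      positivity
    have h2 : (∫ u in a..1, c * u^r) ≤ ∫ u in a..1, u^r/(1+ρ-u*ρ)^2 := by
      apply intervalIntegral.integral_mono_on ha1.le
        (by apply Continuous.intervalIntegrable; fun_prop)
        (hint r a 1 haI (by norm_num))
      intro u hu
      have hu0 : (0:ℝ) ≤ u := ha0.trans hu.1
      have huI : u ∈ Set.Icc (0:ℝ) 1 := ⟨hu0, hu.2⟩
      have hDu : (1:ℝ) ≤ 1+ρ-u*ρ := hD u huI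
      have hcle : c ≤ 1/(1+ρ-u*ρ)^2 := by
        rw [hc]
        apply one_div_le_one_div_of_le (by positivity)
        have : 1+ρ-u*ρ ≤ 1+ρ-a*ρ := by nlinarith [hu.1]
        nlinarith
      calc c * u^r ≤ (1/(1+ρ-u*ρ)^2) * u^r :=
            mul_le_mul_of_nonneg_right hcle (by positivity)
        _ = u^r/(1+ρ-u*ρ)^2 := by ring
    have h3 : (∫ u in a..1, c * u^r) = c * ((1 - a^(r+1))/(r+1)) := by
      rw [intervalIntegral.integral_const_mul, integral_pow]
      norm_num
    have h4 : c * ((1 - a^(r+1))/(r+1)) ≤ I r := by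
      rw [hsplit]
      have := h3 ▸ h2
      linarith
    have h5 : (r:ℝ) * (c * ((1 - a^(r+1))/(r+1))) ≤ (r:ℝ) * I r :=
      mul_le_mul_of_nonneg_left h4 (Nat.cast_nonneg r)
    have hr1 : (0:ℝ) < (r:ℝ)+1 := by positivity
    calc (r:ℝ)/(r+1) * (c * (1 - a^(r+1))) = (r:ℝ) * (c * ((1 - a^(r+1))/(r+1))) := by
          field_simp
      _ ≤ (r:ℝ) * I r := h5
  -- main limit
  have hmain : Filter.Tendsto (fun r : ℕ => (r:ℝ) * I r) Filter.atTop (nhds 1) := by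
    rw [Metric.tendsto_nhds]
    intro ε hε
    set δ : ℝ := min (ε/6) 1 with hδ
    have hδ0 : 0 < δ := lt_min (by linarith) one_pos
    have hδ1 : δ ≤ 1 := min_le_right _ _
    have hδε : δ ≤ ε/6 := min_le_left _ _
    set a : ℝ := 1 - δ with ha
    have haI : a ∈ Set.Ico (0:ℝ) 1 := ⟨by rw [ha]; linarith, by rw [ha]; linarith⟩
    set c : ℝ := 1/(1+ρ-a*ρ)^2 with hc
    have hDa : (1:ℝ) ≤ 1+ρ-a*ρ := hD a ⟨haI.1, haI.2.le⟩
    have ht0 : 0 ≤ ρ*δ := by positivity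
    have ht : ρ * δ ≤ δ := by nlinarith
    have hcge : 1 - ε/2 ≤ c := by
      have hDa' : 1+ρ-a*ρ = 1 + ρ*δ := by rw [ha]; ring
      have h1 : (0:ℝ) < (1+ρ*δ)^2 := by positivity
      have hkey : 1 - c ≤ 3 * (ρ*δ) := by
        rw [hc, hDa']
        have h2 : (1:ℝ) - 1/(1+ρ*δ)^2 = ((1+ρ*δ)^2 - 1)/(1+ρ*δ)^2 := by field_simp
        rw [h2, div_le_iff₀ h1]
        nlinarith [ht0, mul_nonneg ht0 ht0, mul_nonneg (mul_nonneg ht0 ht0) ht0]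
      nlinarith
    -- the lower-bound sequence tends to c
    have h_rr : Filter.Tendsto (fun r : ℕ => (r:ℝ)/(r+1)) Filter.atTop (nhds 1) := by
      have h := tendsto_one_div_add_atTop_nhds_zero_nat (𝕜 := ℝ)
      have h2 := (tendsto_const_nhds :
        Filter.Tendsto (fun _ : ℕ => (1:ℝ)) Filter.atTop (nhds 1)).sub h
      rw [sub_zero] at h2
      refine h2.congr fun r => ?_
      have : ((r:ℝ)+1) ≠ 0 := by positivity
      field_simp
      ring
    have h_pow : Filter.Tendsto (fun r : ℕ => a^(r+1)) Filter.atTop (nhds 0) :=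
      (tendsto_pow_atTop_nhds_zero_of_lt_one haI.1 haI.2).comp (Filter.tendsto_add_atTop_nat 1)
    have hB : Filter.Tendsto (fun r : ℕ => (r:ℝ)/(r+1) * (c * (1 - a^(r+1))))
        Filter.atTop (nhds c) := by
      have := h_rr.mul ((tendsto_const_nhds :
          Filter.Tendsto (fun _ : ℕ => c) Filter.atTop (nhds c)).mul
        ((tendsto_const_nhds :
          Filter.Tendsto (fun _ : ℕ => (1:ℝ)) Filter.atTop (nhds 1)).sub h_pow))
      simpa using this
    have hev : ∀ᶠ r : ℕ in Filter.atTop, 1 - ε < (r:ℝ)/(r+1) * (c * (1 - a^(r+1))) :=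
      hB.eventually_const_lt (by linarith)
    filter_upwards [hev] with r hr
    have hlow := hlb a haI r
    have hup := hub r
    rw [Real.dist_eq, abs_lt]
    constructor <;> linarith
  -- conclude
  have h := hmain.const_mul (1-ρ)
  rw [mul_one] at h
  refine h.congr fun r => ?_
  rw [hπ₀ r, show (∫ u in (0:ℝ)..1, u^r/(1+ρ-u*ρ)^2) = I r from rfl]
  have hρne : (ρ:ℝ)^(r+1) ≠ 0 := pow_ne_zero _ (ne_of_gt hρ0)
  field_simp
end

section
/- For 0 < ρ < 1, the generating function G(z) = (ρ(1-ρ)/((1+ρ)[1-(1+ρ)z]²)) · {1 - ((1+ρ)/ρ)·z·log[(1-ρz)(1+ρ)] - (1+ρ)z} satisfies the first-order ODE z[1-(1+ρ)z]G'(z) - [1+(1+ρ)z]G(z) = -(ρ(1-ρ)/(1+ρ))·(1+z)/(1-ρz) for 0 < z < 1/(1+ρ). -/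
/-!
Write `G = C · N / D²` with `C = ρ(1-ρ)/(1+ρ)`, `D = 1 - (1+ρ)z` and `N` the bracket. Since
`D' = -(1+ρ)`, the operator `z D ∂ - (1 + (1+ρ)z)` sends `C N / D²` to `C (z N' - N) / D`. In `N`
the logarithm only occurs as `z · log`, so it cancels from `z N' - N`, which leaves the rational
function `(1+ρ)z² / (1-ρz) - 1 = -D (1+z) / (1-ρz)`.
-/

open Real

theorem mul_deriv_sub_div_one_sub_sq {a C z n' : ℝ} {n : ℝ → ℝ} (hn : HasDerivAt n n' z)
    (hD : 1 - a * z ≠ 0) :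
    z * (1 - a * z) * deriv (fun x => C / (1 - a * x) ^ 2 * n x) z
        - (1 + a * z) * (C / (1 - a * z) ^ 2 * n z)
      = C * (z * n' - n z) / (1 - a * z) := by
  have hD' : HasDerivAt (fun x => 1 - a * x) (-a) z := by
    simpa using ((hasDerivAt_id z).const_mul a).const_sub 1
  have hg := ((hasDerivAt_const z C).fun_div (hD'.fun_pow 2) (pow_ne_zero 2 hD)).fun_mul hn
  -- `field_simp` recognises the denominator only in its normal form `1 - z * a`
  have hza : 1 - z * a ≠ 0 := by rwa [mul_comm]
  rw [hg.deriv]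
  field_simp
  ring

noncomputable def genFunNumerator (ρ z : ℝ) : ℝ :=
  1 - ((1 + ρ) / ρ) * z * log ((1 - ρ * z) * (1 + ρ)) - (1 + ρ) * z

theorem hasDerivAt_genFunNumerator {ρ z : ℝ} (hρ : ρ ≠ 0) (h : (1 - ρ * z) * (1 + ρ) ≠ 0) :
    HasDerivAt (genFunNumerator ρ)
      (-((1 + ρ) / ρ) * log ((1 - ρ * z) * (1 + ρ)) + (1 + ρ) * z / (1 - ρ * z) - (1 + ρ)) z := by
  have hu : HasDerivAt (fun x => (1 - ρ * x) * (1 + ρ)) (-ρ * (1 + ρ)) z := by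
    simpa using (((hasDerivAt_id z).const_mul ρ).const_sub 1).mul_const (1 + ρ)
  have hzlog := ((hasDerivAt_id' z).const_mul ((1 + ρ) / ρ)).fun_mul (hu.log h)
  have hzρ : 1 - z * ρ ≠ 0 := by rw [mul_comm]; exact left_ne_zero_of_mul h
  refine (((hasDerivAt_const z 1).fun_sub hzlog).fun_sub
    ((hasDerivAt_id' z).const_mul (1 + ρ))).congr_deriv ?_
  field_simp
  ring

theorem mul_deriv_sub_genFunNumerator {ρ z : ℝ} (hR : 1 - ρ * z ≠ 0) :
    z * (-((1 + ρ) / ρ) * log ((1 - ρ * z) * (1 + ρ)) + (1 + ρ) * z / (1 - ρ * z) - (1 + ρ))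
        - genFunNumerator ρ z
      = -(1 - (1 + ρ) * z) * (1 + z) / (1 - ρ * z) := by
  have hzρ : 1 - z * ρ ≠ 0 := by rwa [mul_comm]
  rw [genFunNumerator]
  field_simp
  ring

theorem stmt_17_general (ρ : ℝ) (hρ0 : 0 < ρ)
    (G : ℝ → ℝ)
    (hG : ∀ z : ℝ, G z = (ρ*(1-ρ)/((1+ρ)*(1-(1+ρ)*z)^2)) *
      (1 - ((1+ρ)/ρ)*z*Real.log ((1-ρ*z)*(1+ρ)) - (1+ρ)*z)) :
    ∀ z : ℝ, 0 < z → z < 1/(1+ρ) →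
      z*(1-(1+ρ)*z)*(deriv G z) - (1+(1+ρ)*z)*(G z)
        = -(ρ*(1-ρ)/(1+ρ)) * (1+z)/(1-ρ*z) := by
  intro z hz0 hz1
  have ha : 0 < 1 + ρ := by linarith
  have hD : 0 < 1 - (1 + ρ) * z := by
    have := (lt_div_iff₀ ha).mp hz1
    linarith
  have hR : 0 < 1 - ρ * z := by nlinarith
  have hGeq : G = fun x => ρ * (1 - ρ) / (1 + ρ) / (1 - (1 + ρ) * x) ^ 2 * genFunNumerator ρ x :=
    funext fun x => by rw [hG, div_mul_eq_div_div, genFunNumerator]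
  have hN := hasDerivAt_genFunNumerator hρ0.ne' (mul_pos hR ha).ne'
  rw [hGeq, mul_deriv_sub_div_one_sub_sq hN hD.ne', mul_deriv_sub_genFunNumerator hR.ne']
  field_simp

theorem stmt_17 (ρ : ℝ) (hρ0 : 0 < ρ) (hρ1 : ρ < 1)
    (G : ℝ → ℝ)
    (hG : ∀ z : ℝ, G z = (ρ*(1-ρ)/((1+ρ)*(1-(1+ρ)*z)^2)) *
      (1 - ((1+ρ)/ρ)*z*Real.log ((1-ρ*z)*(1+ρ)) - (1+ρ)*z)) :
    ∀ z : ℝ, 0 < z → z < 1/(1+ρ) →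
      z*(1-(1+ρ)*z)*(deriv G z) - (1+(1+ρ)*z)*(G z)
        = -(ρ*(1-ρ)/(1+ρ)) * (1+z)/(1-ρ*z) :=
  stmt_17_general ρ hρ0 G hG
end
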